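/- arXiv:1806.03053 — 3 statements merged into one kernel-verified Lean document; each statement's English description precedes it below -/
import Mathlib

section
/- For any predicate 𝒫 and any digital path P with n points, the middle map m([i,j]) = ⌊(i+j)/2⌋, restricted to the set of saturated subpaths of P with respect to 𝒫, is injective: two saturated subpaths with the same middle are equal (as index intervals). -/
/-- The list of points `(p_i, …, p_j)` of the digital path `P` on the index
interval `[i, j]`. -/
def seg (P : ℕ → ℤ × ℤ) (i j : ℕ) : List (ℤ × ℤ) :=
  (List.range (j - i + 1)).map (fun t => P (i + t))

/-- The subpath of `P` (a digital path with `n` points) given by the index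
interval `[i, j]` is saturated with respect to the predicate `Pred`:
`Pred` holds on it and every subpath `[i', j']` of `P` containing it on which
`Pred` holds equals it. -/
def IsSaturated (Pred : List (ℤ × ℤ) → Prop) (P : ℕ → ℤ × ℤ) (n i j : ℕ) : Prop :=
  i ≤ j ∧ j < n ∧ Pred (seg P i j) ∧
    ∀ i' j' : ℕ, i' ≤ j' → j' < n → i' ≤ i → j ≤ j' → Pred (seg P i' j') →
      i' = i ∧ j' = j

/-- The middle map `m([i,j]) = ⌊(i+j)/2⌋` is injective on the saturated
subpaths: two saturated subpaths with the same middle are equal. -/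
theorem middle_injOn_saturated (Pred : List (ℤ × ℤ) → Prop) (P : ℕ → ℤ × ℤ)
    (n i j i' j' : ℕ)
    (h : IsSaturated Pred P n i j) (h' : IsSaturated Pred P n i' j')
    (hm : (i + j) / 2 = (i' + j') / 2) :
    i = i' ∧ j = j' := by
  obtain ⟨hij, hjn, hp, hsat⟩ := h
  obtain ⟨hij', hjn', hp', hsat'⟩ := h'
  have hcase : (i' ≤ i ∧ j ≤ j') ∨ (i ≤ i' ∧ j' ≤ j) := by omega
  rcases hcase with ⟨h1, h2⟩ | ⟨h1, h2⟩
  · obtain ⟨e1, e2⟩ := hsat i' j' hij' hjn' h1 h2 hp'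
    exact ⟨e1.symm, e2.symm⟩
  · exact hsat' i j hij hjn h1 h2 hp
end

section
/- Let 𝒫 be a conservative predicate and P a digital path with n points. The number of saturated subpaths of P with respect to 𝒫 is at most the number of indices k ∈ {0,…,n−1} such that 𝒫 holds on the singleton list (p_k). -/
/-- A predicate on finite lists of points of ℤ² is conservative if whenever it
holds for a list, it holds for every nonempty contiguous sublist of it. -/
def Conservative (Pred : List (ℤ × ℤ) → Prop) : Prop :=
  ∀ X Y : List (ℤ × ℤ), Pred X → Y ≠ [] → Y.IsInfix X → Pred Y

/-- For a conservative predicate, the number of saturated subpaths of `P` is at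
most the number of indices `k ∈ {0,…,n−1}` such that the predicate holds on the
singleton list `(p_k)`. -/
theorem saturated_card_le_singleton_card (Pred : List (ℤ × ℤ) → Prop)
    (hc : Conservative Pred) (P : ℕ → ℤ × ℤ) (n : ℕ) :
    {q : ℕ × ℕ | IsSaturated Pred P n q.1 q.2}.ncard ≤
      {k : ℕ | k < n ∧ Pred [P k]}.ncard := by
  have hseg : ∀ i j : ℕ, ∃ t, seg P i j = P i :: t := by
    intro i j
    refine ⟨(List.range (j - i)).map (fun t => P (i + 1 + t)), ?_⟩
    unfold seg
    rw [List.range_succ_eq_map, List.map_cons, List.map_map]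
    simp [Function.comp, add_assoc, add_comm 1]
  have hmem : ∀ q ∈ {q : ℕ × ℕ | IsSaturated Pred P n q.1 q.2},
      q.1 ∈ {k : ℕ | k < n ∧ Pred [P k]} := by
    rintro ⟨i, j⟩ ⟨hij, hjn, hp, _⟩
    refine ⟨lt_of_le_of_lt hij hjn, ?_⟩
    obtain ⟨t, ht⟩ := hseg i j
    exact hc _ _ hp (by simp) ⟨[], t, by simp [ht]⟩
  have hinj : Set.InjOn Prod.fst {q : ℕ × ℕ | IsSaturated Pred P n q.1 q.2} := by
    rintro ⟨i, j⟩ ⟨hij, hjn, hp, hsat⟩ ⟨i', j'⟩ ⟨hij', hjn', hp', hsat'⟩ h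
    simp only at h
    subst h
    rcases le_total j j' with hle | hle
    · obtain ⟨-, hj⟩ := hsat i j' (hij.trans hle) hjn' le_rfl hle hp'
      simp [hj]
    · obtain ⟨-, hj⟩ := hsat' i j (hij'.trans hle) hjn le_rfl hle hp
      simp [hj]
  exact Set.ncard_le_ncard_of_injOn Prod.fst hmem hinj
    ((Set.finite_Iio n).subset fun k hk => hk.1)
end

section
/- Let 𝒫 be a predicate, P a digital path with n points, and S = [i,j] a saturated subpath of P with j + 1 ≤ n − 1. If T = [i',j'] is any saturated subpath of P containing the index j+1 (i.e. i' ≤ j+1 ≤ j'), then the middle of T is strictly greater than the middle of S: ⌊(i+j)/2⌋ < ⌊(i'+j')/2⌋. -/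
/-- If `S = [i,j]` is a saturated subpath of `P` with `j + 1 ≤ n − 1`, then any
saturated subpath `T = [i',j']` containing the index `j+1` has a middle
strictly greater than the middle of `S`. -/
theorem restart_middle_lt (Pred : List (ℤ × ℤ) → Prop) (P : ℕ → ℤ × ℤ)
    (n i j : ℕ) (hS : IsSaturated Pred P n i j) (hj : j + 1 ≤ n - 1)
    (i' j' : ℕ) (hT : IsSaturated Pred P n i' j')
    (h1 : i' ≤ j + 1) (h2 : j + 1 ≤ j') :
    (i + j) / 2 < (i' + j') / 2 := by
  obtain ⟨hij, hjn, hPS, hmax⟩ := hS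
  obtain ⟨hij', hjn', hPT, _⟩ := hT
  have hi : i < i' := by
    by_contra h
    push_neg at h
    have := hmax i' j' hij' hjn' h (by omega) hPT
    omega
  omega
end
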